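/- For nonnegative integers i ≥ j ≥ 1 and p ≥ 1, one has {i+p-1, j+p-1}_{p-1} = (1/j!) Σ_{k=j}^{i} (-1)^{k-j} k! {i+p, k+p}_p, where {n,m}_r denotes the r-Stirling number of the second kind. -/

import Mathlib

/-! Write `a m = m! * rS2 r i m`. Comparing coefficients in
`e^{(r+1)t}(e^t-1)^m = e^{rt}(e^t-1)^m + e^{rt}(e^t-1)^{m+1}` gives
`m! * rS2 (r+1) i m = a m + a (m+1)`. Such a relation is inverted by an alternating sum, which
telescopes down to `a j` because `a (i+1) = 0`. -/

open Finset

/-- The `r`-Stirling numbers of the second kind: `rS2 r i j = {i+r, j+r}_r`,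
with generating function `∑_i {i+r, j+r}_r t^i/i! = (1/j!) e^{rt}(e^t-1)^j`. -/
def rS2 (r : ℕ) : ℕ → ℕ → ℕ
  | 0, 0 => 1
  | 0, _ + 1 => 0
  | i + 1, 0 => r * rS2 r i 0
  | i + 1, j + 1 => (j + 1 + r) * rS2 r i (j + 1) + rS2 r i j

open scoped Nat

theorem alternating_sum_Ico_add_succ {R : Type*} [CommRing R] (a : ℕ → R) {j n : ℕ}
    (hjn : j ≤ n) :
    ∑ k ∈ Ico j n, (-1) ^ (k - j) * (a k + a (k + 1)) = a j - (-1) ^ (n - j) * a n := by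
  have telescope := sum_range_sub' (fun t ↦ (-1 : R) ^ t * a (j + t)) (n - j)
  rw [sum_Ico_eq_sum_range, Nat.add_sub_cancel' hjn] at *
  simp only [add_zero, pow_zero, one_mul, Nat.add_sub_cancel_left] at telescope ⊢
  rw [← telescope]
  refine sum_congr rfl fun t _ ↦ ?_
  rw [pow_succ, ← add_assoc]
  ring

theorem rS2_eq_zero_of_lt (r : ℕ) : ∀ {i j : ℕ}, i < j → rS2 r i j = 0
  | 0, _ + 1, _ => rfl
  | i + 1, j + 1, h => by
    rw [rS2, rS2_eq_zero_of_lt r (by omega : i < j + 1), rS2_eq_zero_of_lt r (by omega : i < j),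
      mul_zero]

theorem rS2_succ_param (r : ℕ) : ∀ i m, rS2 (r + 1) i m = (m + 1) * rS2 r i (m + 1) + rS2 r i m
  | 0, 0 => rfl
  | 0, m + 1 => rfl
  | i + 1, 0 => by
    simp only [rS2, rS2_succ_param r i 0]
    ring
  | i + 1, m + 1 => by
    simp only [rS2, rS2_succ_param r i (m + 1), rS2_succ_param r i m]
    ring

theorem factorial_mul_rS2_succ_param (r i m : ℕ) :
    (m ! * rS2 (r + 1) i m : ℚ) = m ! * rS2 r i m + (m + 1)! * rS2 r i (m + 1) := by
  rw [rS2_succ_param, Nat.factorial_succ]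
  push_cast
  ring

theorem factorial_mul_rS2_eq_alternating_sum (r i j : ℕ) :
    (j ! * rS2 r i j : ℚ) =
      ∑ k ∈ Icc j i, (-1) ^ (k - j) * (k ! : ℚ) * (rS2 (r + 1) i k : ℚ) := by
  rcases lt_or_ge i j with hij | hji
  · simp [rS2_eq_zero_of_lt r hij, Icc_eq_empty_of_lt hij]
  have hvanish : (rS2 r i (i + 1) : ℚ) = 0 := by exact_mod_cast rS2_eq_zero_of_lt r i.lt_succ_self
  rw [← Ico_add_one_right_eq_Icc]
  simp_rw [mul_assoc, factorial_mul_rS2_succ_param]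
  rw [alternating_sum_Ico_add_succ (fun m ↦ (m ! * rS2 r i m : ℚ)) (by omega), hvanish]
  ring

theorem rStirlingSecond_alternating_sum_general (i j p : ℕ) (hp : 1 ≤ p) :
    (rS2 (p - 1) i j : ℚ) =
      (1 / (Nat.factorial j : ℚ)) *
        ∑ k ∈ Finset.Icc j i, (-1) ^ (k - j) * (Nat.factorial k : ℚ) * (rS2 p i k : ℚ) := by
  obtain ⟨r, rfl⟩ := Nat.exists_eq_add_of_le' hp
  rw [Nat.add_sub_cancel, ← factorial_mul_rS2_eq_alternating_sum]
  field_simp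

theorem rStirlingSecond_alternating_sum (i j p : ℕ) (hj : 1 ≤ j) (hij : j ≤ i) (hp : 1 ≤ p) :
    (rS2 (p - 1) i j : ℚ) =
      (1 / (Nat.factorial j : ℚ)) *
        ∑ k ∈ Finset.Icc j i, (-1) ^ (k - j) * (Nat.factorial k : ℚ) * (rS2 p i k : ℚ) :=
  rStirlingSecond_alternating_sum_general i j p hp
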